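/- (Ascent achieved by a second-order step.) Let A be a nonzero n×n real symmetric matrix and let 0 < ε ≤ 15‖A‖₁. Let σ ∈ M_r and u ∈ T_σ M_r with ‖u‖_F = 1, G_σ(u) ≥ 0, and H_σ(u) ≥ ε/2. Then, with step size t = ε/(15‖A‖₁), the geodesic step satisfies f(σ(t)) − f(σ) ≥ ε³/(2700 ‖A‖₁²). -/

import Mathlib

open scoped BigOperators RealInnerProductSpace
open Finset Matrix

noncomputable section

/-- Points on the sphere live in Euclidean space `ℝ^r`. -/
abbrev Pt (r : ℕ) := EuclideanSpace ℝ (Fin r)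

/-- A configuration: `n` rows, each a vector in `ℝ^r`. -/
abbrev Conf (n r : ℕ) := Fin n → Pt r

/-- Membership in the manifold `M_r`: all rows are unit vectors. -/
def inM {n r : ℕ} (σ : Conf n r) : Prop := ∀ i, ‖σ i‖ = 1

/-- `g_i(σ) = ∑_{j ≠ i} A_{ij} σ_j`. -/
def gvec {n r : ℕ} (A : Matrix (Fin n) (Fin n) ℝ) (σ : Conf n r) (i : Fin n) : Pt r :=
  ∑ j ∈ univ.erase i, A i j • σ j

/-- The objective `f(σ) = ⟨A, σσᵀ⟩ = ∑_{i,j} A_{ij} ⟨σ_i, σ_j⟩`. -/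
def fval {n r : ℕ} (A : Matrix (Fin n) (Fin n) ℝ) (σ : Conf n r) : ℝ :=
  ∑ i, ∑ j, A i j * ⟪σ i, σ j⟫

/-- The BCM update `T_i(σ)`: replace row `i` by `g_i(σ)/‖g_i(σ)‖`
    (unchanged if `g_i(σ) = 0`). -/
def Tupd {n r : ℕ} (A : Matrix (Fin n) (Fin n) ℝ) (σ : Conf n r) (i : Fin n) : Conf n r :=
  letI := Classical.dec (gvec A σ i = 0)
  Function.update σ i (if gvec A σ i = 0 then σ i else ‖gvec A σ i‖⁻¹ • gvec A σ i)

/-- `‖A‖₁ = max_j ∑_i |A_{ij}|`. -/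
def Anorm1 {n : ℕ} (A : Matrix (Fin n) (Fin n) ℝ) : ℝ := ⨆ j, ∑ i, |A i j|

/-- `‖A‖_{1,1} = ∑_{i,j} |A_{ij}|`. -/
def Anorm11 {n : ℕ} (A : Matrix (Fin n) (Fin n) ℝ) : ℝ := ∑ i, ∑ j, |A i j|

/-- Squared Riemannian gradient norm
    `‖grad f(σ)‖_F² = 2 ∑_i (‖g_i‖² − ⟨σ_i, g_i⟩²)`. -/
def gradNormSq {n r : ℕ} (A : Matrix (Fin n) (Fin n) ℝ) (σ : Conf n r) : ℝ :=
  2 * ∑ i, (‖gvec A σ i‖ ^ 2 - ⟪σ i, gvec A σ i⟫ ^ 2)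

/-- The geodesic through `σ` in direction `u`, at time `t`:
    `σ_i(t) = σ_i cos(‖u_i‖ t) + (u_i/‖u_i‖) sin(‖u_i‖ t)` (rows with `u_i = 0` stay fixed). -/
def geo {n r : ℕ} (σ u : Conf n r) (t : ℝ) : Conf n r :=
  fun i => Real.cos (‖u i‖ * t) • σ i + (Real.sin (‖u i‖ * t) / ‖u i‖) • u i

/-- Tangency: `u ∈ T_σ M_r` iff every row of `u` is orthogonal to the
    corresponding row of `σ`. -/
def tangent {n r : ℕ} (σ u : Conf n r) : Prop := ∀ i, ⟪u i, σ i⟫ = 0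

/-- Squared Frobenius norm `‖u‖_F² = ∑_i ‖u_i‖²`. -/
def fnormSq {n r : ℕ} (u : Conf n r) : ℝ := ∑ i, ‖u i‖ ^ 2

/-- Riemannian gradient pairing `G_σ(u) = 2 ∑_i ⟨u_i, g_i(σ)⟩`. -/
def Gform {n r : ℕ} (A : Matrix (Fin n) (Fin n) ℝ) (σ u : Conf n r) : ℝ :=
  2 * ∑ i, ⟪u i, gvec A σ i⟫

/-- Riemannian Hessian quadratic form
    `H_σ(u) = 2 ∑_i (⟨u_i, v_i⟩ − ‖u_i‖² ⟨σ_i, g_i(σ)⟩)` with `v_i = ∑_{j≠i} A_{ij} u_j`. -/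
def Hform {n r : ℕ} (A : Matrix (Fin n) (Fin n) ℝ) (σ u : Conf n r) : ℝ :=
  2 * ∑ i, (⟪u i, gvec A u i⟫ - ‖u i‖ ^ 2 * ⟪σ i, gvec A σ i⟫)

/-- Stationary point: `g_i(σ) ≠ 0` and `σ_i = g_i(σ)/‖g_i(σ)‖` for all `i`. -/
def stationary {n r : ℕ} (A : Matrix (Fin n) (Fin n) ℝ) (σ : Conf n r) : Prop :=
  ∀ i, gvec A σ i ≠ 0 ∧ σ i = ‖gvec A σ i‖⁻¹ • gvec A σ i

/-- `w ∈ V_σ = {σB : Bᵀ = −B}` (rows of `σB` given by `(σB)_{ik} = ∑_l σ_{il} B_{lk}`). -/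
def inV {n r : ℕ} (σ w : Conf n r) : Prop :=
  ∃ B : Matrix (Fin r) (Fin r) ℝ, Bᵀ = -B ∧ ∀ i k, w i k = ∑ l, σ i l * B l k

/-- Frobenius-orthogonality of `u` to the subspace `V_σ`. -/
def perpV {n r : ℕ} (σ u : Conf n r) : Prop :=
  ∀ w : Conf n r, inV σ w → ∑ i, ⟪u i, w i⟫ = 0

/-- `f` satisfies quadratic decay at `σ` with constant `μ`:
    `H_σ(u) ≤ −μ ‖u‖_F²` for all tangent `u` Frobenius-orthogonal to `V_σ`. -/
def quadDecay {n r : ℕ} (A : Matrix (Fin n) (Fin n) ℝ) (σ : Conf n r) (μ : ℝ) : Prop :=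
  ∀ u : Conf n r, tangent σ u → perpV σ u → Hform A σ u ≤ -μ * fnormSq u

/-- Geodesic distance `dist(σ, σ') = (∑_i arccos⟨σ_i, σ'_i⟩²)^{1/2}`. -/
def gdist {n r : ℕ} (σ σ' : Conf n r) : ℝ :=
  Real.sqrt (∑ i, Real.arccos ⟪σ i, σ' i⟫ ^ 2)

/-- Right-multiplication of a configuration by a matrix `Q ∈ ℝ^{r×r}` (rowwise). -/
def rowMulQ {n r : ℕ} (σ : Conf n r) (Q : Matrix (Fin r) (Fin r) ℝ) : Conf n r :=
  fun i => (EuclideanSpace.equiv (Fin r) ℝ).symm (fun k => ∑ l, σ i l * Q l k)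

/-- Distance to the equivalence class `[σ'] = {σ'Q : Q ∈ O(r)}`. -/
def distClass {n r : ℕ} (σ σ' : Conf n r) : ℝ :=
  ⨅ Q : {Q : Matrix (Fin r) (Fin r) ℝ // Qᵀ * Q = 1}, gdist σ (rowMulQ σ' Q.1)

/-- `f* = sup_{σ ∈ M_r} f(σ)`. -/
def fstar {n r : ℕ} (A : Matrix (Fin n) (Fin n) ℝ) : ℝ :=
  sSup (fval A '' {σ : Conf n r | inM σ})

/-- The optimal value of the SDP with unit-diagonal constraints. -/
def SDPval {n : ℕ} (A : Matrix (Fin n) (Fin n) ℝ) : ℝ :=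
  sSup {y | ∃ X : Matrix (Fin n) (Fin n) ℝ, X.PosSemidef ∧ (∀ i, X i i = 1) ∧
    y = ∑ i, ∑ j, A i j * X i j}

/-- BCM iterates along a sequence of coordinates `ω`. -/
def iterSeq {n r : ℕ} (A : Matrix (Fin n) (Fin n) ℝ) (σ0 : Conf n r) (ω : ℕ → Fin n) :
    ℕ → Conf n r
  | 0 => σ0
  | k + 1 => Tupd A (iterSeq A σ0 ω k) (ω k)

/-- The set of rows where `u` is nonzero. -/
def suppu {n r : ℕ} (u : Conf n r) : Finset (Fin n) :=
  letI := Classical.decPred (fun i : Fin n => u i ≠ 0)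
  Finset.univ.filter (fun i : Fin n => u i ≠ 0)

/-!
Each row of the geodesic moves on a great circle, so the diagonal of `A` does not contribute
to `f(σ(t)) - f(σ)`. Expanding `cos` and `sin` to second order, the Gram entry
`⟨σ_i(t), σ_j(t)⟩` agrees with its second-order Taylor polynomial up to
`(11/12) t³ (‖u_i‖³ + ‖u_j‖³)`. Summing against the off-diagonal part of `A`, whose column sums
are at most `‖A‖₁`, gives `f(σ(t)) - f(σ) ≥ t G_σ(u) + (t²/2) H_σ(u) - (11/6) ‖A‖₁ t³`, and with
`G_σ(u) ≥ 0`, `H_σ(u) ≥ ε/2` and `t = ε/(15‖A‖₁)` the right-hand side is at least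
`ε³/(2700 ‖A‖₁²)`.
-/

namespace Real

lemma abs_cos_sub_one_le (s : ℝ) : |cos s - 1| ≤ s ^ 2 / 2 := by
  rw [abs_sub_comm, abs_of_nonneg (by linarith [cos_le_one s])]
  linarith [one_sub_sq_div_two_le_cos (x := s)]

lemma abs_sin_sub_self_le {s : ℝ} (hs : 0 ≤ s) : |sin s - s| ≤ s ^ 3 / 6 := by
  rw [abs_sub_comm, abs_of_nonneg (by linarith [sin_le hs])]
  linarith [sin_ge_sub_cube hs]

lemma abs_cos_sub_taylor_le {s : ℝ} (hs0 : 0 ≤ s) (hs1 : s ≤ 1) :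
    |cos s - (1 - s ^ 2 / 2)| ≤ 5 / 96 * s ^ 3 := by
  have h := cos_bound (x := s) (by rwa [abs_of_nonneg hs0])
  rw [abs_of_nonneg hs0] at h
  linarith [pow_le_pow_of_le_one hs0 hs1 (show 3 ≤ 4 by norm_num)]

end Real

section GreatCircle

variable {E : Type*} [NormedAddCommGroup E] [InnerProductSpace ℝ E]

/-- The great circle through the unit vector `x` with initial velocity `v ⟂ x`. -/
def greatCircle (x v : E) (t : ℝ) : E :=
  Real.cos (‖v‖ * t) • x + (Real.sin (‖v‖ * t) / ‖v‖) • v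

lemma norm_div_norm_smul {v : E} {c : ℝ} (hc : v = 0 → c = 0) : ‖(c / ‖v‖) • v‖ = |c| := by
  rcases eq_or_ne v 0 with rfl | hv
  · simp [hc rfl]
  · rw [norm_smul, norm_div, norm_norm, Real.norm_eq_abs,
      div_mul_cancel₀ _ (norm_ne_zero_iff.2 hv)]

lemma mul_div_norm_smul (v : E) (t : ℝ) : (‖v‖ * t / ‖v‖) • v = t • v := by
  rcases eq_or_ne v 0 with rfl | hv
  · simp
  · rw [mul_div_cancel_left₀ _ (norm_ne_zero_iff.2 hv)]

variable {x v : E}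

lemma norm_smul_add_div_norm_smul_sq (hx : ‖x‖ = 1) (hv : ⟪v, x⟫ = 0) (a : ℝ) {c : ℝ}
    (hc : v = 0 → c = 0) : ‖a • x + (c / ‖v‖) • v‖ ^ 2 = a ^ 2 + c ^ 2 := by
  have horth : ⟪a • x, (c / ‖v‖) • v⟫ = 0 := by
    rw [real_inner_smul_left, real_inner_smul_right, real_inner_comm, hv, mul_zero, mul_zero]
  rw [norm_add_sq_real, horth, norm_div_norm_smul hc, norm_smul, hx, mul_one, Real.norm_eq_abs,
    sq_abs, sq_abs, mul_zero, add_zero]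

lemma norm_smul_add_div_norm_smul_le (hx : ‖x‖ = 1) (a : ℝ) {c : ℝ} (hc : v = 0 → c = 0) :
    ‖a • x + (c / ‖v‖) • v‖ ≤ |a| + |c| :=
  calc _ ≤ ‖a • x‖ + ‖(c / ‖v‖) • v‖ := norm_add_le _ _
    _ = |a| + |c| := by rw [norm_smul, hx, mul_one, Real.norm_eq_abs, norm_div_norm_smul hc]

lemma norm_greatCircle (hx : ‖x‖ = 1) (hv : ⟪v, x⟫ = 0) (t : ℝ) : ‖greatCircle x v t‖ = 1 := by
  have h := norm_smul_add_div_norm_smul_sq hx hv (Real.cos (‖v‖ * t))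
    (c := Real.sin (‖v‖ * t)) (by rintro rfl; simp)
  rw [Real.cos_sq_add_sin_sq, pow_eq_one_iff_of_nonneg (norm_nonneg _) two_ne_zero] at h
  exact h

lemma norm_greatCircle_sub_le (hx : ‖x‖ = 1) (hv : ⟪v, x⟫ = 0) {t : ℝ} (ht : 0 ≤ t) :
    ‖greatCircle x v t - x‖ ≤ ‖v‖ * t := by
  have h : greatCircle x v t - x =
      (Real.cos (‖v‖ * t) - 1) • x + (Real.sin (‖v‖ * t) / ‖v‖) • v := by
    rw [greatCircle]; module
  rw [← sq_le_sq₀ (norm_nonneg _) (by positivity), h,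
    norm_smul_add_div_norm_smul_sq hx hv _ (by rintro rfl; simp)]
  nlinarith [Real.cos_sq_add_sin_sq (‖v‖ * t), Real.one_sub_sq_div_two_le_cos (x := ‖v‖ * t)]

lemma norm_greatCircle_sub_sub_le (hx : ‖x‖ = 1) {t : ℝ} (ht : 0 ≤ t) (hvt : ‖v‖ * t ≤ 1) :
    ‖greatCircle x v t - x - t • v‖ ≤ 2 / 3 * (‖v‖ * t) ^ 2 := by
  have hs : 0 ≤ ‖v‖ * t := by positivity
  have h : greatCircle x v t - x - t • v =
      (Real.cos (‖v‖ * t) - 1) • x + ((Real.sin (‖v‖ * t) - ‖v‖ * t) / ‖v‖) • v := by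
    rw [greatCircle, ← mul_div_norm_smul v t]; module
  rw [h]
  refine (norm_smul_add_div_norm_smul_le hx _ (by rintro rfl; simp)).trans ?_
  linarith [Real.abs_cos_sub_one_le (‖v‖ * t), Real.abs_sin_sub_self_le hs,
    pow_le_pow_of_le_one hs hvt (show 2 ≤ 3 by norm_num)]

lemma norm_greatCircle_sub_sub_add_le (hx : ‖x‖ = 1) {t : ℝ} (ht : 0 ≤ t)
    (hvt : ‖v‖ * t ≤ 1) :
    ‖greatCircle x v t - x - t • v + ((‖v‖ * t) ^ 2 / 2) • x‖ ≤ (‖v‖ * t) ^ 3 / 4 := by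
  have hs : 0 ≤ ‖v‖ * t := by positivity
  have h : greatCircle x v t - x - t • v + ((‖v‖ * t) ^ 2 / 2) • x =
      (Real.cos (‖v‖ * t) - (1 - (‖v‖ * t) ^ 2 / 2)) • x
        + ((Real.sin (‖v‖ * t) - ‖v‖ * t) / ‖v‖) • v := by
    rw [greatCircle, ← mul_div_norm_smul v t]; module
  rw [h]
  refine (norm_smul_add_div_norm_smul_le hx _ (by rintro rfl; simp)).trans ?_
  linarith [Real.abs_cos_sub_taylor_le hs hvt, Real.abs_sin_sub_self_le hs, pow_nonneg hs 3]

lemma abs_inner_greatCircle_sub_le {y u : E} (hx : ‖x‖ = 1) (hy : ‖y‖ = 1) (hv : ⟪v, y⟫ = 0)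
    {t : ℝ} (ht : 0 ≤ t) (hut : ‖u‖ * t ≤ 1) (hvt : ‖v‖ * t ≤ 1) :
    |⟪greatCircle x u t, greatCircle y v t⟫ - ⟪x, y⟫ - t * (⟪u, y⟫ + ⟪x, v⟫)
        - t ^ 2 * (⟪u, v⟫ - (‖u‖ ^ 2 + ‖v‖ ^ 2) / 2 * ⟪x, y⟫)|
      ≤ 11 / 12 * t ^ 3 * (‖u‖ ^ 3 + ‖v‖ ^ 3) := by
  set p := greatCircle x u t
  set q := greatCircle y v t
  have ha : 0 ≤ ‖u‖ * t := by positivity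
  have hb : 0 ≤ ‖v‖ * t := by positivity
  -- the remainder is bilinear in the Taylor remainders of the two great circles
  have hrem : ⟪p, q⟫ - ⟪x, y⟫ - t * (⟪u, y⟫ + ⟪x, v⟫)
        - t ^ 2 * (⟪u, v⟫ - (‖u‖ ^ 2 + ‖v‖ ^ 2) / 2 * ⟪x, y⟫) =
      ⟪x, q - y - t • v + ((‖v‖ * t) ^ 2 / 2) • y⟫ + ⟪p - x - t • u + ((‖u‖ * t) ^ 2 / 2) • x, y⟫
        + ⟪p - x - t • u, q - y⟫ + t * ⟪u, q - y - t • v⟫ := by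
    simp only [inner_add_left, inner_add_right, inner_sub_left, inner_sub_right,
      real_inner_smul_left, real_inner_smul_right]
    ring
  have h1 : |⟪x, q - y - t • v + ((‖v‖ * t) ^ 2 / 2) • y⟫| ≤ (‖v‖ * t) ^ 3 / 4 := by
    refine (abs_real_inner_le_norm _ _).trans ?_
    rw [hx, one_mul]
    exact norm_greatCircle_sub_sub_add_le hy ht hvt
  have h2 : |⟪p - x - t • u + ((‖u‖ * t) ^ 2 / 2) • x, y⟫| ≤ (‖u‖ * t) ^ 3 / 4 := by
    refine (abs_real_inner_le_norm _ _).trans ?_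
    rw [hy, mul_one]
    exact norm_greatCircle_sub_sub_add_le hx ht hut
  have h3 : |⟪p - x - t • u, q - y⟫| ≤ 2 / 3 * (‖u‖ * t) ^ 2 * (‖v‖ * t) :=
    (abs_real_inner_le_norm _ _).trans <| mul_le_mul (norm_greatCircle_sub_sub_le hx ht hut)
      (norm_greatCircle_sub_le hy hv ht) (norm_nonneg _) (by positivity)
  have h4 : |t * ⟪u, q - y - t • v⟫| ≤ (‖u‖ * t) * (2 / 3 * (‖v‖ * t) ^ 2) := by
    rw [abs_mul, abs_of_nonneg ht, mul_comm ‖u‖, mul_assoc]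
    exact mul_le_mul_of_nonneg_left ((abs_real_inner_le_norm _ _).trans <|
      mul_le_mul_of_nonneg_left (norm_greatCircle_sub_sub_le hy ht hvt) (norm_nonneg _)) ht
  have hcubes : (‖u‖ * t) ^ 2 * (‖v‖ * t) + (‖u‖ * t) * (‖v‖ * t) ^ 2
      ≤ (‖u‖ * t) ^ 3 + (‖v‖ * t) ^ 3 := by
    nlinarith [mul_nonneg (add_nonneg ha hb) (sq_nonneg (‖u‖ * t - ‖v‖ * t))]
  rw [hrem]
  calc _ ≤ 11 / 12 * ((‖u‖ * t) ^ 3 + (‖v‖ * t) ^ 3) := by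
        refine (abs_add_le _ _).trans ?_
        linarith [abs_add_le (⟪x, q - y - t • v + ((‖v‖ * t) ^ 2 / 2) • y⟫
          + ⟪p - x - t • u + ((‖u‖ * t) ^ 2 / 2) • x, y⟫) ⟪p - x - t • u, q - y⟫,
          abs_add_le ⟪x, q - y - t • v + ((‖v‖ * t) ^ 2 / 2) • y⟫
            ⟪p - x - t • u + ((‖u‖ * t) ^ 2 / 2) • x, y⟫]
    _ = 11 / 12 * t ^ 3 * (‖u‖ ^ 3 + ‖v‖ ^ 3) := by ring

end GreatCircle

section OffDiagonal

variable {n r : ℕ}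

def offDiagonal (A : Matrix (Fin n) (Fin n) ℝ) : Matrix (Fin n) (Fin n) ℝ :=
  fun i j => if i = j then 0 else A i j

lemma Matrix.IsSymm.offDiagonal {A : Matrix (Fin n) (Fin n) ℝ} (hA : A.IsSymm) :
    (offDiagonal A).IsSymm := by
  ext i j
  by_cases h : i = j
  · simp [_root_.offDiagonal, h]
  · simp [_root_.offDiagonal, h, Ne.symm h, hA.apply i j]

lemma sum_abs_offDiagonal_le_Anorm1 (A : Matrix (Fin n) (Fin n) ℝ) (j : Fin n) :
    ∑ i, |offDiagonal A i j| ≤ Anorm1 A := by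
  refine (sum_le_sum fun i _ => ?_).trans
    (le_ciSup (f := fun j => ∑ i, |A i j|) (Set.finite_range _).bddAbove j)
  unfold offDiagonal
  split_ifs <;> simp

lemma gvec_eq_sum_offDiagonal (A : Matrix (Fin n) (Fin n) ℝ) (σ : Conf n r) (i : Fin n) :
    gvec A σ i = ∑ j, offDiagonal A i j • σ j := by
  rw [gvec, ← sum_erase (f := fun j => offDiagonal A i j • σ j) (a := i) univ
    (by simp [offDiagonal])]
  exact sum_congr rfl fun j hj => by rw [offDiagonal, if_neg (ne_of_mem_erase hj).symm]

lemma inner_gvec (A : Matrix (Fin n) (Fin n) ℝ) (σ τ : Conf n r) (i : Fin n) :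
    ⟪τ i, gvec A σ i⟫ = ∑ j, offDiagonal A i j * ⟪τ i, σ j⟫ := by
  simp only [gvec_eq_sum_offDiagonal, inner_sum, real_inner_smul_right]

lemma sum_sum_mul_swap {B : Matrix (Fin n) (Fin n) ℝ} (hB : B.IsSymm) (F : Fin n → Fin n → ℝ) :
    ∑ i, ∑ j, B i j * F j i = ∑ i, ∑ j, B i j * F i j := by
  rw [sum_comm]
  exact sum_congr rfl fun i _ => sum_congr rfl fun j _ => by rw [hB.apply i j]

lemma abs_sum_sum_mul_le {B : Matrix (Fin n) (Fin n) ℝ} (hB : B.IsSymm) {N : ℝ}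
    (hcol : ∀ j, ∑ i, |B i j| ≤ N) {R : Fin n → Fin n → ℝ} {c : Fin n → ℝ}
    (hR : ∀ i j, |R i j| ≤ c i + c j) :
    |∑ i, ∑ j, B i j * R i j| ≤ 2 * N * ∑ i, c i := by
  have hc : ∀ i, 0 ≤ c i := fun i => by linarith [abs_nonneg (R i i), hR i i]
  have hhalf : ∑ i, ∑ j, |B i j| * c j ≤ N * ∑ i, c i := by
    rw [sum_comm, mul_sum]
    exact sum_le_sum fun j _ => by
      rw [← sum_mul]; exact mul_le_mul_of_nonneg_right (hcol j) (hc j)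
  have hswap : ∑ i, ∑ j, |B i j| * c i = ∑ i, ∑ j, |B i j| * c j :=
    (sum_sum_mul_swap (B := fun i j => |B i j|)
      (by ext i j; exact congrArg abs (hB.apply i j)) fun j _ => c j).symm
  calc |∑ i, ∑ j, B i j * R i j| ≤ ∑ i, ∑ j, |B i j| * (c i + c j) := by
        refine (abs_sum_le_sum_abs _ _).trans (sum_le_sum fun i _ => ?_)
        refine (abs_sum_le_sum_abs _ _).trans (sum_le_sum fun j _ => ?_)
        rw [abs_mul]; exact mul_le_mul_of_nonneg_left (hR i j) (abs_nonneg _)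
    _ ≤ 2 * N * ∑ i, c i := by
        simp only [mul_add, sum_add_distrib, hswap]; linarith

lemma fval_sub_fval_eq (A : Matrix (Fin n) (Fin n) ℝ) {p σ : Conf n r}
    (h : ∀ i, ‖p i‖ = ‖σ i‖) :
    fval A p - fval A σ = ∑ i, ∑ j, offDiagonal A i j * (⟪p i, p j⟫ - ⟪σ i, σ j⟫) := by
  simp only [fval, ← sum_sub_distrib, ← mul_sub]
  refine sum_congr rfl fun i _ => sum_congr rfl fun j _ => ?_
  by_cases hij : i = j
  · subst hij; simp [h]
  · simp [offDiagonal, hij]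

lemma Gform_eq_sum_offDiagonal {A : Matrix (Fin n) (Fin n) ℝ} (hA : A.IsSymm) (σ u : Conf n r) :
    Gform A σ u = ∑ i, ∑ j, offDiagonal A i j * (⟪u i, σ j⟫ + ⟪σ i, u j⟫) := by
  have hswap : ∑ i, ∑ j, offDiagonal A i j * ⟪σ i, u j⟫
      = ∑ i, ∑ j, offDiagonal A i j * ⟪u i, σ j⟫ := by
    simpa only [real_inner_comm] using sum_sum_mul_swap hA.offDiagonal fun i j => ⟪u i, σ j⟫
  simp only [Gform, inner_gvec, mul_add, sum_add_distrib, hswap]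
  ring

lemma Hform_eq_sum_offDiagonal {A : Matrix (Fin n) (Fin n) ℝ} (hA : A.IsSymm) (σ u : Conf n r) :
    Hform A σ u =
      2 * ∑ i, ∑ j, offDiagonal A i j * (⟪u i, u j⟫ - (‖u i‖ ^ 2 + ‖u j‖ ^ 2) / 2 * ⟪σ i, σ j⟫) := by
  have hswap : ∑ i, ∑ j, offDiagonal A i j * (‖u j‖ ^ 2 * ⟪σ i, σ j⟫)
      = ∑ i, ∑ j, offDiagonal A i j * (‖u i‖ ^ 2 * ⟪σ i, σ j⟫) := by
    simpa only [real_inner_comm] using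
      sum_sum_mul_swap hA.offDiagonal fun i j => ‖u i‖ ^ 2 * ⟪σ i, σ j⟫
  have hsplit : ∀ i j, offDiagonal A i j * (⟪u i, u j⟫ - (‖u i‖ ^ 2 + ‖u j‖ ^ 2) / 2 * ⟪σ i, σ j⟫)
      = offDiagonal A i j * ⟪u i, u j⟫ - offDiagonal A i j * (‖u i‖ ^ 2 * ⟪σ i, σ j⟫) / 2
        - offDiagonal A i j * (‖u j‖ ^ 2 * ⟪σ i, σ j⟫) / 2 := fun i j => by ring
  simp only [hsplit, sum_sub_distrib, ← sum_div, hswap, Hform, inner_gvec, mul_sum,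
    mul_left_comm (‖u _‖ ^ 2)]
  ring

lemma norm_geo_apply {σ u : Conf n r} (hσ : inM σ) (hu : tangent σ u) (t : ℝ) (i : Fin n) :
    ‖geo σ u t i‖ = ‖σ i‖ := by
  rw [hσ i]
  exact norm_greatCircle (hσ i) (hu i) t

lemma abs_fval_geo_sub_taylor_le {A : Matrix (Fin n) (Fin n) ℝ} (hA : A.IsSymm)
    {σ u : Conf n r} (hσ : inM σ) (hu : tangent σ u) {t : ℝ} (ht : 0 ≤ t)
    (hut : ∀ i, ‖u i‖ * t ≤ 1) :
    |fval A (geo σ u t) - fval A σ - t * Gform A σ u - t ^ 2 / 2 * Hform A σ u|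
      ≤ 11 / 6 * Anorm1 A * t ^ 3 * ∑ i, ‖u i‖ ^ 3 := by
  have hexp : fval A (geo σ u t) - fval A σ - t * Gform A σ u - t ^ 2 / 2 * Hform A σ u =
      ∑ i, ∑ j, offDiagonal A i j * (⟪geo σ u t i, geo σ u t j⟫ - ⟪σ i, σ j⟫
        - t * (⟪u i, σ j⟫ + ⟪σ i, u j⟫)
        - t ^ 2 * (⟪u i, u j⟫ - (‖u i‖ ^ 2 + ‖u j‖ ^ 2) / 2 * ⟪σ i, σ j⟫)) := by
    rw [fval_sub_fval_eq A (norm_geo_apply hσ hu t), Gform_eq_sum_offDiagonal hA,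
      Hform_eq_sum_offDiagonal hA]
    simp only [mul_sum, ← sum_sub_distrib]
    exact sum_congr rfl fun i _ => sum_congr rfl fun j _ => by ring
  rw [hexp]
  calc _ ≤ 2 * Anorm1 A * ∑ i, 11 / 12 * t ^ 3 * ‖u i‖ ^ 3 :=
        abs_sum_sum_mul_le hA.offDiagonal (sum_abs_offDiagonal_le_Anorm1 A) fun i j =>
          (abs_inner_greatCircle_sub_le (hσ i) (hσ j) (hu j) ht (hut i) (hut j)).trans_eq
            (by ring)
    _ = _ := by rw [← mul_sum]; ring

end OffDiagonal

theorem second_order_step_ascent_general {n r : ℕ}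
    (A : Matrix (Fin n) (Fin n) ℝ) (hA : A.IsSymm)
    (ε : ℝ) (hε0 : 0 < ε) (hε1 : ε ≤ 15 * Anorm1 A)
    (σ : Conf n r) (hσ : inM σ) (u : Conf n r) (hu : tangent σ u) (hun : fnormSq u = 1)
    (hG : 0 ≤ Gform A σ u) (hH : ε / 2 ≤ Hform A σ u) :
    ε ^ 3 / (2700 * Anorm1 A ^ 2) ≤ fval A (geo σ u (ε / (15 * Anorm1 A))) - fval A σ := by
  set N := Anorm1 A
  set t := ε / (15 * N) with ht
  have hN : 0 < N := by linarith
  have ht0 : 0 ≤ t := by positivity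
  have ht1 : t ≤ 1 := (div_le_one (by positivity)).2 hε1
  have hrow : ∀ i, ‖u i‖ ≤ 1 := fun i => (sq_le_one_iff₀ (norm_nonneg _)).1 <|
    (single_le_sum (fun k _ => sq_nonneg ‖u k‖) (mem_univ i)).trans hun.le
  have hcubes : ∑ i, ‖u i‖ ^ 3 ≤ 1 := (sum_le_sum fun i _ =>
    pow_le_pow_of_le_one (norm_nonneg _) (hrow i) (by norm_num : 2 ≤ 3)).trans hun.le
  have hexp := abs_fval_geo_sub_taylor_le hA hσ hu ht0 fun i => mul_le_one₀ (hrow i) ht0 ht1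
  have hfirst : 0 ≤ t * Gform A σ u := mul_nonneg ht0 hG
  have hsecond : t ^ 2 / 2 * (ε / 2) ≤ t ^ 2 / 2 * Hform A σ u :=
    mul_le_mul_of_nonneg_left hH (by positivity)
  have hthird : 11 / 6 * N * t ^ 3 * ∑ i, ‖u i‖ ^ 3 ≤ 11 / 6 * N * t ^ 3 :=
    mul_le_of_le_one_right (by positivity) hcubes
  have hstep :
      t ^ 2 / 2 * (ε / 2) - 11 / 6 * N * t ^ 3 = 23 / 15 * (ε ^ 3 / (2700 * N ^ 2)) := by
    rw [ht]
    field_simp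
    ring
  have hbound : 0 ≤ ε ^ 3 / (2700 * N ^ 2) := by positivity
  linarith [(abs_le.1 hexp).1]

/-- ascent achieved by a second-order step with step size
`t = ε/(15‖A‖₁)`. -/
theorem second_order_step_ascent {n r : ℕ} (hn : 0 < n) (hr : 0 < r)
    (A : Matrix (Fin n) (Fin n) ℝ) (hA : A.IsSymm) (hA0 : A ≠ 0)
    (ε : ℝ) (hε0 : 0 < ε) (hε1 : ε ≤ 15 * Anorm1 A)
    (σ : Conf n r) (hσ : inM σ) (u : Conf n r) (hu : tangent σ u) (hun : fnormSq u = 1)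
    (hG : 0 ≤ Gform A σ u) (hH : ε / 2 ≤ Hform A σ u) :
    ε ^ 3 / (2700 * Anorm1 A ^ 2) ≤ fval A (geo σ u (ε / (15 * Anorm1 A))) - fval A σ :=
  second_order_step_ascent_general A hA ε hε0 hε1 σ hσ u hu hun hG hH
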